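/- Let ‖·‖ be a norm on ℝ^d, X ⊆ ℝ^d compact and connected, and P a λ^d-absolutely continuous probability measure on X that is normal. Let ρ* ≥ 0 and assume that for every ρ ≥ ρ* the set M_ρ has at most one topologically connected component (i.e. M_ρ is connected or empty). Let ε, δ > 0 and let (L_ρ)_{ρ≥0} be a family of subsets of X that is decreasing in ρ (ρ₁ ≤ ρ₂ implies L_{ρ₂} ⊆ L_{ρ₁}) and satisfies M_{ρ+ε}^{−δ} ⊆ L_ρ ⊆ M_{max(ρ−ε,0)}^{+δ} for all ρ ≥ ρ*, where the enlargements are taken inside X. Fix ρ ≥ ρ* with M_{ρ+3ε}^{−δ} ≠ ∅ and let τ > 2·ψ*_{M_{ρ+ε}}(δ). Then: (a) any two points of M_{ρ+ε}^{−δ} are τ-connected in M_{ρ+ε}^{−δ}; and (b) every point x ∈ L_{ρ+2ε} and every point y ∈ M_{ρ+ε}^{−δ} are τ-connected in L_ρ. -/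

import Mathlib

open MeasureTheory ENNReal

noncomputable section

/-- `N` is a norm on `ℝ^d`. -/
structure IsNormOn (d : ℕ) (N : (Fin d → ℝ) → ℝ) : Prop where
  eq_zero_iff : ∀ x, N x = 0 ↔ x = 0
  smul : ∀ (a : ℝ) (x : Fin d → ℝ), N (a • x) = |a| * N x
  triangle : ∀ x y, N (x + y) ≤ N x + N y

/-- A symmetric kernel on `ℝ^d`: a bounded measurable function `K : ℝ^d → [0,∞)` that is
strictly positive in a neighborhood of `0`, even, and integrates to `1` with respect to
Lebesgue measure. -/
structure IsSymmKernel (d : ℕ) (K : (Fin d → ℝ) → ℝ) : Prop where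
  measurable : Measurable K
  nonneg : ∀ x, 0 ≤ K x
  bddAbove : BddAbove (Set.range K)
  pos_near_zero : ∀ᶠ x in nhds (0 : Fin d → ℝ), 0 < K x
  symm : ∀ x, K (-x) = K x
  integral_one : ∫ x, K x = 1

/-- The tail function `κ₁(r) := ∫_{ℝ^d ∖ B(0,r)} K dλ^d` of a kernel `K`, with respect to
the norm `N`. -/
def kappaOne (d : ℕ) (N K : (Fin d → ℝ) → ℝ) (r : ℝ) : ℝ :=
  ∫ x in {x : Fin d → ℝ | r < N x}, K x

/-- The tail function `κ∞(r) := sup_{x ∈ ℝ^d ∖ B(0,r)} K x` of a kernel `K`, with respect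
to the norm `N`. -/
def kappaInf (d : ℕ) (N K : (Fin d → ℝ) → ℝ) (r : ℝ) : ℝ :=
  sSup (K '' {x : Fin d → ℝ | r < N x})

/-- The infinite-sample kernel density estimator
`h_{P,δ}(x) := δ^{−d} ∫ K((x−y)/δ) dP(y)`. -/
def kdeP (d : ℕ) (K : (Fin d → ℝ) → ℝ) (δ : ℝ) (P : Measure (Fin d → ℝ))
    (x : Fin d → ℝ) : ℝ :=
  (δ ^ d)⁻¹ * ∫ y, K (δ⁻¹ • (x - y)) ∂P

/-- `h` is a Lebesgue density of the measure `P` on `ℝ^d`. -/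
def IsDensityOf (d : ℕ) (P : Measure (Fin d → ℝ)) (h : (Fin d → ℝ) → ℝ) : Prop :=
  Measurable h ∧ (∀ x, 0 ≤ h x) ∧ P = volume.withDensity fun x => ENNReal.ofReal (h x)

/-- `M_ρ`: the support of the measure `A ↦ λ^d(A ∩ {h ≥ ρ})`, i.e. the set of points all
of whose open neighborhoods intersect `{h ≥ ρ}` in a set of positive Lebesgue measure. -/
def Mset (d : ℕ) (h : (Fin d → ℝ) → ℝ) (ρ : ℝ) : Set (Fin d → ℝ) :=
  {x | ∀ U : Set (Fin d → ℝ), IsOpen U → x ∈ U → 0 < volume (U ∩ {y | ρ ≤ h y})}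

/-- `P` (with density `h`) is normal at level `ρ`: there are densities `h₁, h₂` of `P` with
`λ^d(M_ρ ∖ {h₁ ≥ ρ}) = 0` and `λ^d({h₂ > ρ} ∖ int M_ρ) = 0`. -/
def NormalAtLevel (d : ℕ) (P : Measure (Fin d → ℝ)) (h : (Fin d → ℝ) → ℝ) (ρ : ℝ) : Prop :=
  ∃ h₁ h₂, IsDensityOf d P h₁ ∧ IsDensityOf d P h₂ ∧
    volume (Mset d h ρ \ {x | ρ ≤ h₁ x}) = 0 ∧
    volume ({x | ρ < h₂ x} \ interior (Mset d h ρ)) = 0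

/-- The distance `d(x, A) := inf_{a ∈ A} ‖x − a‖ ∈ [0,∞]` of a point `x` to a set `A`,
taken with respect to the norm `N` (so `d(x, ∅) = ∞`). -/
def distN (d : ℕ) (N : (Fin d → ℝ) → ℝ) (x : Fin d → ℝ) (A : Set (Fin d → ℝ)) : ℝ≥0∞ :=
  ⨅ a ∈ A, ENNReal.ofReal (N (x - a))

/-- The enlargement `A^{+δ} := {x ∈ X : d(x, A) ≤ δ}`, taken inside `X`. -/
def plusIn (d : ℕ) (N : (Fin d → ℝ) → ℝ) (X A : Set (Fin d → ℝ)) (δ : ℝ) :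
    Set (Fin d → ℝ) :=
  {x ∈ X | distN d N x A ≤ ENNReal.ofReal δ}

/-- The erosion `A^{−δ} := X ∖ (X ∖ A)^{+δ}`, taken inside `X`. -/
def minusIn (d : ℕ) (N : (Fin d → ℝ) → ℝ) (X A : Set (Fin d → ℝ)) (δ : ℝ) :
    Set (Fin d → ℝ) :=
  X \ plusIn d N X (X \ A) δ

/-- `ψ*_A(δ) := sup_{x ∈ A} d(x, A^{−δ}) ∈ [0,∞]`. -/
def psiStarIn (d : ℕ) (N : (Fin d → ℝ) → ℝ) (X A : Set (Fin d → ℝ)) (δ : ℝ) : ℝ≥0∞ :=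
  ⨆ x ∈ A, distN d N x (minusIn d N X A δ)

/-- `x` and `y` are `τ`-connected in `A`: there are `x₁,…,x_m ∈ A` with `x₁ = x`,
`x_m = y` and `‖x_i − x_{i+1}‖ < τ` for all `i`. -/
def TauConn (d : ℕ) (N : (Fin d → ℝ) → ℝ) (τ : ℝ) (A : Set (Fin d → ℝ))
    (x y : Fin d → ℝ) : Prop :=
  ∃ (m : ℕ) (f : Fin (m + 1) → Fin d → ℝ), (∀ i, f i ∈ A) ∧ f 0 = x ∧
    f (Fin.last m) = y ∧ ∀ i : Fin m, N (f i.castSucc - f i.succ) < τ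

/-!
Let `M = M_{ρ+ε}` and fix `r` with `ψ*_M(δ) < r < τ/2`, so that every point of `M` lies
within `r` of the erosion `M^{−δ}`. The connected set `M` contains `η`-chains between any two
of its points for every `η > 0`; moving each point of a `(τ − 2r)`-chain to a point of
`M^{−δ}` within `r` gives a `τ`-chain in `M^{−δ}`, which is (a).
For (b), a point `x ∈ L_{ρ+2ε}` lies within `δ` of `M`. As `X` is connected, either
`M^{−δ} = X`, or `M` meets the closure of `X ∖ M` in a point at distance at least `δ` from
`M^{−δ}`, whence `δ ≤ ψ*_M(δ) < r` and `x` lies within `2r < τ` of `M^{−δ} ⊆ L_ρ`.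
-/

namespace IsNormOn

variable {d : ℕ} {N : (Fin d → ℝ) → ℝ}

def toSeminorm (hN : IsNormOn d N) : Seminorm ℝ (Fin d → ℝ) :=
  Seminorm.of N hN.triangle fun a x => by rw [hN.smul, Real.norm_eq_abs]

lemma map_zero (hN : IsNormOn d N) : N 0 = 0 := (hN.eq_zero_iff 0).2 rfl

lemma nonneg (hN : IsNormOn d N) (x : Fin d → ℝ) : 0 ≤ N x :=
  apply_nonneg hN.toSeminorm x

lemma sub_comm (hN : IsNormOn d N) (x y : Fin d → ℝ) : N (x - y) = N (y - x) :=
  map_sub_rev hN.toSeminorm x y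

lemma sub_le_sub_add_sub (hN : IsNormOn d N) (a b c : Fin d → ℝ) :
    N (a - c) ≤ N (a - b) + N (b - c) := by
  simpa only [sub_add_sub_cancel] using hN.triangle (a - b) (b - c)

lemma continuous (hN : IsNormOn d N) : Continuous N :=
  hN.toSeminorm.convexOn.locallyLipschitz.continuous

lemma isOpen_ball (hN : IsNormOn d N) (z : Fin d → ℝ) (η : ℝ) :
    IsOpen {u | N (u - z) < η} :=
  isOpen_lt (hN.continuous.comp (continuous_sub_right z)) continuous_const

lemma mem_ball_self (hN : IsNormOn d N) (z : Fin d → ℝ) {η : ℝ} (hη : 0 < η) :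
    z ∈ {u | N (u - z) < η} := by
  simpa [hN.map_zero] using hη

end IsNormOn

lemma IsPreconnected.exists_mem_closure_diff {E : Type*} [TopologicalSpace E] {X A : Set E}
    (hX : IsPreconnected X) (hA : IsClosed A) (hXA : (X ∩ A).Nonempty) (hXnA : ¬X ⊆ A) :
    ∃ z ∈ A, z ∈ closure (X \ A) := by
  by_contra! h
  obtain ⟨y, hyX, hyA⟩ := hXA
  obtain ⟨p, hpX, hpA⟩ := Set.not_subset.mp hXnA
  have hcover : X ⊆ (closure (X \ A))ᶜ ∪ Aᶜ := fun q _ => by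
    by_cases hq : q ∈ A
    exacts [Or.inl (h q hq), Or.inr hq]
  obtain ⟨q, hqX, hq, hqA⟩ := hX _ _ isClosed_closure.isOpen_compl hA.isOpen_compl hcover
    ⟨y, hyX, h y hyA⟩ ⟨p, hpX, hpA⟩
  exact hq (subset_closure ⟨hqX, hqA⟩)

lemma ENNReal.exists_lt_ofReal_two_mul_lt {a : ℝ≥0∞} {τ : ℝ} (h : 2 * a < ENNReal.ofReal τ) :
    ∃ r : ℝ, a < ENNReal.ofReal r ∧ 2 * r < τ := by
  obtain ⟨t, -, hat, htτ⟩ := ENNReal.lt_iff_exists_real_btwn.mp h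
  refine ⟨t / 2, ?_, ?_⟩
  · have ht : ENNReal.ofReal t = 2 * ENNReal.ofReal (t / 2) := by
      rw [← ENNReal.ofReal_ofNat 2, ← ENNReal.ofReal_mul zero_le_two, mul_div_cancel₀ t two_ne_zero]
    rw [ht] at hat
    exact (ENNReal.mul_lt_mul_iff_right two_ne_zero ofNat_ne_top).mp hat
  · linarith [(ENNReal.ofReal_lt_ofReal_iff'.mp htτ).1]

lemma Mset_antitone (d : ℕ) (h : (Fin d → ℝ) → ℝ) : Antitone (Mset d h) :=
  fun _ _ hρ _ hx U hU hxU =>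
  (hx U hU hxU).trans_le (measure_mono fun _ hy => ⟨hy.1, hρ.trans hy.2⟩)

lemma isClosed_Mset (d : ℕ) (h : (Fin d → ℝ) → ℝ) (ρ : ℝ) : IsClosed (Mset d h ρ) := by
  rw [← isOpen_compl_iff, isOpen_iff_forall_mem_open]
  intro x hx
  simp only [Mset, Set.mem_compl_iff, Set.mem_ofPred_eq, not_forall, not_lt,
    nonpos_iff_eq_zero] at hx
  obtain ⟨U, hU, hxU, hU0⟩ := hx
  exact ⟨U, fun y hy hyM => (hyM U hU hy).ne' hU0, hU, hxU⟩

section Distance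

variable {d : ℕ} {N : (Fin d → ℝ) → ℝ} {X A : Set (Fin d → ℝ)} {x : Fin d → ℝ} {δ r : ℝ}

lemma distN_le_of_mem {a : Fin d → ℝ} (ha : a ∈ A) :
    distN d N x A ≤ ENNReal.ofReal (N (x - a)) :=
  iInf₂_le a ha

lemma distN_antitone : Antitone (distN d N x) :=
  fun _ _ hAB => biInf_mono hAB

lemma distN_empty : distN d N x ∅ = ⊤ := by
  simp [distN]

lemma exists_lt_of_distN_lt (h : distN d N x A < ENNReal.ofReal r) :
    ∃ a ∈ A, N (x - a) < r := by
  simp only [distN, iInf_lt_iff] at h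
  obtain ⟨a, ha, hlt⟩ := h
  exact ⟨a, ha, (ENNReal.ofReal_lt_ofReal_iff'.mp hlt).1⟩

lemma minusIn_subset (hN : IsNormOn d N) : minusIn d N X A δ ⊆ A := by
  intro x hx
  by_contra hxA
  refine hx.2 ⟨hx.1, ?_⟩
  calc distN d N x (X \ A) ≤ ENNReal.ofReal (N (x - x)) := distN_le_of_mem ⟨hx.1, hxA⟩
    _ ≤ ENNReal.ofReal δ := by simp [hN.map_zero]

lemma minusIn_eq_of_subset (hXA : X ⊆ A) : minusIn d N X A δ = X := by
  simp [minusIn, plusIn, Set.sdiff_eq_empty.mpr hXA, distN_empty]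

lemma ofReal_le_distN_minusIn (hN : IsNormOn d N) {z : Fin d → ℝ}
    (hz : z ∈ closure (X \ A)) : ENNReal.ofReal δ ≤ distN d N z (minusIn d N X A δ) := by
  refine le_iInf₂ fun w hw => ?_
  rw [ENNReal.ofReal_le_ofReal_iff (hN.nonneg _)]
  by_contra! hzw
  obtain ⟨u, hu : N (u - z) < δ - N (z - w), huXA⟩ := mem_closure_iff.mp hz _
    (hN.isOpen_ball z (δ - N (z - w))) (hN.mem_ball_self z (by linarith))
  have hwu : N (w - u) < δ := by
    linarith [hN.sub_le_sub_add_sub w z u, hN.sub_comm w z, hN.sub_comm z u]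
  exact hw.2 ⟨hw.1, (distN_le_of_mem huXA).trans (ENNReal.ofReal_le_ofReal hwu.le)⟩

lemma distN_le_psiStarIn {z : Fin d → ℝ} (hz : z ∈ A) :
    distN d N z (minusIn d N X A δ) ≤ psiStarIn d N X A δ :=
  le_iSup₂ (f := fun x _ => distN d N x (minusIn d N X A δ)) z hz

lemma exists_near_minusIn (hψ : psiStarIn d N X A δ < ENNReal.ofReal r) {z : Fin d → ℝ}
    (hz : z ∈ A) : ∃ w ∈ minusIn d N X A δ, N (z - w) < r :=
  exists_lt_of_distN_lt ((distN_le_psiStarIn hz).trans_lt hψ)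

lemma ofReal_le_psiStarIn (hN : IsNormOn d N) (hX : IsPreconnected X) (hA : IsClosed A)
    (hXA : (X ∩ A).Nonempty) (hXnA : ¬X ⊆ A) : ENNReal.ofReal δ ≤ psiStarIn d N X A δ := by
  obtain ⟨z, hzA, hz⟩ := hX.exists_mem_closure_diff hA hXA hXnA
  exact (ofReal_le_distN_minusIn hN hz).trans (distN_le_psiStarIn hzA)

lemma exists_near_minusIn_of_distN_le (hN : IsNormOn d N) (hX : IsPreconnected X)
    (hA : IsClosed A) (hXA : (X ∩ A).Nonempty) (hψ : psiStarIn d N X A δ < ENNReal.ofReal r)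
    (hxX : x ∈ X) (hxA : distN d N x A ≤ ENNReal.ofReal δ) :
    ∃ w ∈ minusIn d N X A δ, N (x - w) < 2 * r := by
  have hr : 0 < r := ENNReal.ofReal_pos.mp (zero_le.trans_lt hψ)
  by_cases hXsub : X ⊆ A
  · refine ⟨x, by rwa [minusIn_eq_of_subset hXsub], ?_⟩
    simpa [hN.map_zero] using hr
  obtain ⟨a, haA, hxa⟩ := exists_lt_of_distN_lt <|
    hxA.trans_lt ((ofReal_le_psiStarIn hN hX hA hXA hXsub).trans_lt hψ)
  obtain ⟨w, hw, haw⟩ := exists_near_minusIn hψ haA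
  exact ⟨w, hw, by linarith [hN.sub_le_sub_add_sub x a w]⟩

end Distance

namespace TauConn

variable {d : ℕ} {N : (Fin d → ℝ) → ℝ} {τ : ℝ} {A B : Set (Fin d → ℝ)} {x y z : Fin d → ℝ}

lemma refl (hx : x ∈ A) : TauConn d N τ A x x :=
  ⟨0, fun _ => x, fun _ => hx, rfl, rfl, fun i => i.elim0⟩

lemma mono (hc : TauConn d N τ A x y) (hAB : A ⊆ B) : TauConn d N τ B x y := by
  obtain ⟨m, f, hfA, hf0, hfl, hstep⟩ := hc
  exact ⟨m, f, fun i => hAB (hfA i), hf0, hfl, hstep⟩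

lemma cons (hc : TauConn d N τ A z y) (hx : x ∈ A) (hxz : N (x - z) < τ) :
    TauConn d N τ A x y := by
  obtain ⟨m, f, hfA, hf0, hfl, hstep⟩ := hc
  refine ⟨m + 1, Fin.cons x f, Fin.cases hx hfA, rfl, hfl, Fin.cases ?_ fun j => ?_⟩
  · simpa [hf0] using hxz
  · simpa [← Fin.succ_castSucc] using hstep j

lemma snoc (hc : TauConn d N τ A x z) (hy : y ∈ A) (hzy : N (z - y) < τ) :
    TauConn d N τ A x y := by
  obtain ⟨m, f, hfA, hf0, hfl, hstep⟩ := hc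
  refine ⟨m + 1, Fin.snoc f y, fun i => ?_, by simpa using hf0, by simp,
    fun i => ?_⟩
  · induction i using Fin.lastCases with
    | last => simpa using hy
    | cast j => simpa using hfA j
  · induction i using Fin.lastCases with
    | last => simpa [hfl] using hzy
    | cast j => rw [Fin.succ_castSucc, Fin.snoc_castSucc, Fin.snoc_castSucc]; exact hstep j

end TauConn

section Chains

variable {d : ℕ} {N : (Fin d → ℝ) → ℝ} {τ η r : ℝ} {A B : Set (Fin d → ℝ)} {x y : Fin d → ℝ}

lemma tauConn_of_isPreconnected (hN : IsNormOn d N) (hA : IsPreconnected A) (hη : 0 < η)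
    (hx : x ∈ A) (hy : y ∈ A) : TauConn d N η A x y := by
  by_contra hxy
  set S := {z | TauConn d N η A x z}
  let U := ⋃ z ∈ A ∩ S, {u | N (u - z) < η}
  let V := ⋃ z ∈ A \ S, {u | N (u - z) < η}
  have hcover : A ⊆ U ∪ V := fun z hz => by
    by_cases hzS : z ∈ S
    · exact Or.inl (Set.mem_biUnion ⟨hz, hzS⟩ (hN.mem_ball_self z hη))
    · exact Or.inr (Set.mem_biUnion ⟨hz, hzS⟩ (hN.mem_ball_self z hη))
  obtain ⟨p, hpA, hpU, hpV⟩ := hA U V (isOpen_biUnion fun z _ => hN.isOpen_ball z η)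
    (isOpen_biUnion fun z _ => hN.isOpen_ball z η) hcover
    ⟨x, hx, Set.mem_biUnion ⟨hx, TauConn.refl hx⟩ (hN.mem_ball_self x hη)⟩
    ⟨y, hy, Set.mem_biUnion ⟨hy, hxy⟩ (hN.mem_ball_self y hη)⟩
  obtain ⟨z₁, ⟨-, hz₁⟩, hpz₁⟩ := Set.mem_iUnion₂.mp hpU
  obtain ⟨z₂, ⟨hz₂A, hz₂⟩, hpz₂⟩ := Set.mem_iUnion₂.mp hpV
  have hp : TauConn d N η A x p := hz₁.snoc hpA (by rw [hN.sub_comm]; exact hpz₁)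
  exact hz₂ (hp.snoc hz₂A hpz₂)

lemma TauConn.map_of_near (hN : IsNormOn d N) (hc : TauConn d N η B x y)
    {φ : (Fin d → ℝ) → Fin d → ℝ} (hφ : ∀ b ∈ B, φ b ∈ A ∧ N (b - φ b) < r) :
    TauConn d N (η + 2 * r) A (φ x) (φ y) := by
  obtain ⟨m, f, hfB, rfl, rfl, hstep⟩ := hc
  refine ⟨m, φ ∘ f, fun i => (hφ _ (hfB i)).1, rfl, rfl, fun i => ?_⟩
  have h₁ := (hφ _ (hfB i.castSucc)).2
  have h₂ := (hφ _ (hfB i.succ)).2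
  calc N (φ (f i.castSucc) - φ (f i.succ))
      ≤ N (φ (f i.castSucc) - f i.castSucc) + N (f i.castSucc - f i.succ)
        + N (f i.succ - φ (f i.succ)) := by
        linarith [hN.sub_le_sub_add_sub (φ (f i.castSucc)) (f i.castSucc) (φ (f i.succ)),
          hN.sub_le_sub_add_sub (f i.castSucc) (f i.succ) (φ (f i.succ))]
    _ < η + 2 * r := by linarith [hN.sub_comm (φ (f i.castSucc)) (f i.castSucc), hstep i]

lemma tauConn_of_forall_near (hN : IsNormOn d N) (hAB : A ⊆ B) (hB : IsPreconnected B)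
    (hnear : ∀ b ∈ B, ∃ a ∈ A, N (b - a) < r) (hτ : 2 * r < τ) (hx : x ∈ A) (hy : y ∈ A) :
    TauConn d N τ A x y := by
  choose! φ hφA hφ using hnear
  have hr : 0 < r := (hN.nonneg _).trans_lt (hφ x (hAB hx))
  have hc : TauConn d N τ A (φ x) (φ y) := by
    simpa using (tauConn_of_isPreconnected hN hB (sub_pos.mpr hτ) (hAB hx) (hAB hy)).map_of_near
      hN fun b hb => ⟨hφA b hb, hφ b hb⟩
  refine (hc.cons hx (by linarith [hφ x (hAB hx)])).snoc hy ?_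
  linarith [hφ y (hAB hy), hN.sub_comm (φ y) y]

end Chains

theorem tau_connected_control_general {d : ℕ}
    (N : (Fin d → ℝ) → ℝ) (hN : IsNormOn d N)
    (X : Set (Fin d → ℝ)) (hXconn : IsConnected X)
    (h : (Fin d → ℝ) → ℝ)
    (ρstar : ℝ)
    (hconn : ∀ ρ : ℝ, ρstar ≤ ρ → IsPreconnected (Mset d h ρ))
    (ε δ : ℝ) (hε : 0 < ε)
    (L : ℝ → Set (Fin d → ℝ)) (hLX : ∀ ρ, L ρ ⊆ X)
    (hLdec : ∀ ρ₁ ρ₂ : ℝ, ρ₁ ≤ ρ₂ → L ρ₂ ⊆ L ρ₁)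
    (hLincl : ∀ ρ : ℝ, ρstar ≤ ρ →
      minusIn d N X (Mset d h (ρ + ε)) δ ⊆ L ρ ∧
      L ρ ⊆ plusIn d N X (Mset d h (max (ρ - ε) 0)) δ)
    (ρ : ℝ) (hρ : ρstar ≤ ρ)
    (τ : ℝ) (hτ : 2 * psiStarIn d N X (Mset d h (ρ + ε)) δ < ENNReal.ofReal τ) :
    (∀ x ∈ minusIn d N X (Mset d h (ρ + ε)) δ,
      ∀ y ∈ minusIn d N X (Mset d h (ρ + ε)) δ,
        TauConn d N τ (minusIn d N X (Mset d h (ρ + ε)) δ) x y) ∧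
    (∀ x ∈ L (ρ + 2 * ε), ∀ y ∈ minusIn d N X (Mset d h (ρ + ε)) δ,
        TauConn d N τ (L ρ) x y) := by
  obtain ⟨r, hψr, hrτ⟩ := ENNReal.exists_lt_ofReal_two_mul_lt hτ
  set M := Mset d h (ρ + ε)
  set Mm := minusIn d N X M δ
  have hsub : Mm ⊆ M := minusIn_subset hN
  have part_a : ∀ x ∈ Mm, ∀ y ∈ Mm, TauConn d N τ Mm x y := fun x hx y hy =>
    tauConn_of_forall_near hN hsub (hconn _ (by linarith))
      (fun _ hz => exists_near_minusIn hψr hz) hrτ hx hy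
  refine ⟨part_a, fun x hx y hy => ?_⟩
  have hxM : distN d N x M ≤ ENNReal.ofReal δ :=
    (distN_antitone (Mset_antitone d h (le_max_of_le_left (by linarith)))).trans
      ((hLincl (ρ + 2 * ε) (by linarith)).2 hx).2
  obtain ⟨w, hw, hxw⟩ := exists_near_minusIn_of_distN_le hN hXconn.isPreconnected
    (isClosed_Mset d h (ρ + ε)) ⟨y, hy.1, hsub hy⟩ hψr (hLX _ hx) hxM
  exact ((part_a w hw y hy).mono (hLincl ρ hρ).1).cons
    (hLdec ρ _ (by linarith) hx) (by linarith)

/-- (Connectivity control, cf. Theorem `estim-control-low` i).)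
Let `X ⊆ ℝ^d` be compact and connected and `P` a normal Lebesgue-absolutely continuous
probability measure on `X` such that `M_ρ` has at most one connected component for all
`ρ ≥ ρ*`.  Let `(L_ρ)` be a decreasing family of subsets of `X` with
`M_{ρ+ε}^{−δ} ⊆ L_ρ ⊆ M_{max(ρ−ε,0)}^{+δ}` for all `ρ ≥ ρ*`.  Fix `ρ ≥ ρ*` with
`M_{ρ+3ε}^{−δ} ≠ ∅` and `τ > 2ψ*_{M_{ρ+ε}}(δ)`.  Then (a) any two points of
`M_{ρ+ε}^{−δ}` are `τ`-connected in `M_{ρ+ε}^{−δ}`, and (b) every `x ∈ L_{ρ+2ε}` and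
every `y ∈ M_{ρ+ε}^{−δ}` are `τ`-connected in `L_ρ`. -/
theorem tau_connected_control {d : ℕ} (hd : 0 < d)
    (N : (Fin d → ℝ) → ℝ) (hN : IsNormOn d N)
    (X : Set (Fin d → ℝ)) (hXcompact : IsCompact X) (hXconn : IsConnected X)
    (P : Measure (Fin d → ℝ)) [IsProbabilityMeasure P] (hPX : P Xᶜ = 0)
    (h : (Fin d → ℝ) → ℝ) (hdens : IsDensityOf d P h)
    (hnormal : ∀ ρ : ℝ, 0 ≤ ρ → NormalAtLevel d P h ρ)
    (ρstar : ℝ) (hρstar : 0 ≤ ρstar)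
    (hconn : ∀ ρ : ℝ, ρstar ≤ ρ → IsPreconnected (Mset d h ρ))
    (ε δ : ℝ) (hε : 0 < ε) (hδ : 0 < δ)
    (L : ℝ → Set (Fin d → ℝ)) (hLX : ∀ ρ, L ρ ⊆ X)
    (hLdec : ∀ ρ₁ ρ₂ : ℝ, ρ₁ ≤ ρ₂ → L ρ₂ ⊆ L ρ₁)
    (hLincl : ∀ ρ : ℝ, ρstar ≤ ρ →
      minusIn d N X (Mset d h (ρ + ε)) δ ⊆ L ρ ∧
      L ρ ⊆ plusIn d N X (Mset d h (max (ρ - ε) 0)) δ)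
    (ρ : ℝ) (hρ : ρstar ≤ ρ)
    (hne : (minusIn d N X (Mset d h (ρ + 3 * ε)) δ).Nonempty)
    (τ : ℝ) (hτ : 2 * psiStarIn d N X (Mset d h (ρ + ε)) δ < ENNReal.ofReal τ) :
    (∀ x ∈ minusIn d N X (Mset d h (ρ + ε)) δ,
      ∀ y ∈ minusIn d N X (Mset d h (ρ + ε)) δ,
        TauConn d N τ (minusIn d N X (Mset d h (ρ + ε)) δ) x y) ∧
    (∀ x ∈ L (ρ + 2 * ε), ∀ y ∈ minusIn d N X (Mset d h (ρ + ε)) δ,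
        TauConn d N τ (L ρ) x y) :=
  tau_connected_control_general N hN X hXconn h ρstar hconn ε δ hε L hLX hLdec hLincl ρ hρ τ hτ
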